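/- arXiv:0805.2205 — 2 statements merged into one kernel-verified Lean document; each statement's English description precedes it below -/
import Mathlib

section
/- Let n be a positive integer divisible by 8 and let C_1, C_2 be binary codes of length n with C_1 ⊆ C_2 ⊆ C_1^⊥, where C_1 is doubly even and contains the all-ones vector 𝟏. If C is a quaternary even code of length n containing 𝟏 with π(C) = ι^{-1}(C) = C_1, then there exists a unique quaternary even code C' of length n containing 𝟏 such that C ⊆ C', π(C') = C_1, and ι^{-1}(C') = C_2. -/
open scoped BigOperators

set_option maxHeartbeats 1000000

namespace Paper

/-- Self-orthogonality of a set of vectors w.r.t. the standard inner product. -/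
def sorth {m : ℕ} {ι : Type} [Fintype ι] (S : Set (ι → ZMod m)) : Prop :=
  ∀ x ∈ S, ∀ y ∈ S, ∑ i, x i * y i = 0

/-- The dual (as a set) of a set of vectors w.r.t. the standard inner product. -/
def dualSet {m : ℕ} {ι : Type} [Fintype ι] (S : Set (ι → ZMod m)) : Set (ι → ZMod m) :=
  {x | ∀ y ∈ S, ∑ i, x i * y i = 0}

/-- A set of vectors is doubly even if every element has Hamming weight divisible by 4. -/
def doublyEven {m : ℕ} {ι : Type} [Fintype ι] (S : Set (ι → ZMod m)) : Prop :=
  ∀ x ∈ S, 4 ∣ (Finset.univ.filter fun i => x i ≠ 0).card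

/-- Coordinatewise reduction map `(Z_{p^2})^ι → (Z_p)^ι`. -/
def res (p : ℕ) [Fact p.Prime] {ι : Type} (v : ι → ZMod (p ^ 2)) : ι → ZMod p :=
  fun i => ZMod.castHom (dvd_pow_self p (by norm_num)) (ZMod p) (v i)

/-- The injection `(Z_p)^ι → (Z_{p^2})^ι` induced by `Z_p ≅ pZ_{p^2} ⊆ Z_{p^2}`. -/
def iot (p : ℕ) {ι : Type} (v : ι → ZMod p) : ι → ZMod (p ^ 2) :=
  fun i => (p : ZMod (p ^ 2)) * (ZMod.cast (v i))

/-- Coordinatewise reduction map `(Z_4)^ι → (Z_2)^ι`. -/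
def res4 {ι : Type} (v : ι → ZMod 4) : ι → ZMod 2 :=
  fun i => ZMod.castHom (by norm_num : (2:ℕ) ∣ 4) (ZMod 2) (v i)

/-- The injection `(Z_2)^ι → (Z_4)^ι`. -/
def iot4 {ι : Type} (v : ι → ZMod 2) : ι → ZMod 4 :=
  fun i => (2 : ZMod 4) * (ZMod.cast (v i))

/-- Euclidean weight on `Z_4`. -/
def ewt (x : ZMod 4) : ℕ := if x = 0 then 0 else if x = 2 then 4 else 1

/-- A quaternary code is even if every codeword has Euclidean weight divisible by 8. -/
def evenCode {ι : Type} [Fintype ι] (S : Set (ι → ZMod 4)) : Prop :=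
  ∀ x ∈ S, 8 ∣ ∑ i, ewt (x i)

/-- The code over `Z_q` generated by the rows of an integer matrix. -/
def intRowSpan (q : ℕ) {κ ι : Type} (G : Matrix κ ι ℤ) :
    Submodule (ZMod q) (ι → ZMod q) :=
  Submodule.span (ZMod q) (Set.range fun i => fun c => ((G i c : ℤ) : ZMod q))

/-- The Gaussian binomial coefficient `[n choose k]_p`. -/
def gauss (p n k : ℕ) : ℚ :=
  ∏ i ∈ Finset.range k, ((p : ℚ) ^ n - (p : ℚ) ^ i) / ((p : ℚ) ^ k - (p : ℚ) ^ i)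


lemma iot4_add' {ι : Type} (v w : ι → ZMod 2) : iot4 (v + w) = iot4 v + iot4 w := by
  funext i
  exact (by decide : ∀ a b : ZMod 2,
    (2:ZMod 4) * ZMod.cast (a+b) = 2 * ZMod.cast a + 2 * ZMod.cast b) (v i) (w i)

lemma iot4_zero' {ι : Type} : iot4 (0 : ι → ZMod 2) = 0 := by
  funext i
  exact (by decide : (2:ZMod 4) * ZMod.cast (0:ZMod 2) = 0)

/-- `ι(C₂)` as a `Z₄`-submodule. -/
def iotSub {n : ℕ} (C2 : Submodule (ZMod 2) (Fin n → ZMod 2)) :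
    Submodule (ZMod 4) (Fin n → ZMod 4) where
  carrier := iot4 '' C2
  zero_mem' := ⟨0, C2.zero_mem, iot4_zero'⟩
  add_mem' := by
    rintro x y ⟨v, hv, rfl⟩ ⟨w, hw, rfl⟩
    exact ⟨v + w, C2.add_mem hv hw, iot4_add' v w⟩
  smul_mem' := by
    rintro r x ⟨w, hw, rfl⟩
    refine ⟨(ZMod.castHom (by norm_num : (2:ℕ)∣4) (ZMod 2) r) • w, C2.smul_mem _ hw, ?_⟩
    funext i
    exact ((by decide : ∀ (r : ZMod 4) (a : ZMod 2),
      r * ((2:ZMod 4) * ZMod.cast a)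
        = 2 * ZMod.cast ((ZMod.castHom (by norm_num : (2:ℕ)∣4) (ZMod 2) r) * a)) r (w i)).symm

lemma mem_iotSub {n : ℕ} {C2 : Submodule (ZMod 2) (Fin n → ZMod 2)} {x : Fin n → ZMod 4} :
    x ∈ iotSub C2 ↔ ∃ w ∈ C2, iot4 w = x := Iff.rfl

lemma exists_iot4 {ι : Type} (x : ι → ZMod 4) (h : ∀ i, res4 x i = 0) : ∃ v, x = iot4 v := by
  refine ⟨fun i => if x i = 2 then 1 else 0, funext fun i => ?_⟩
  exact (by decide : ∀ a : ZMod 4,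
    ZMod.castHom (by norm_num : (2:ℕ)∣4) (ZMod 2) a = 0 →
      a = 2 * ZMod.cast (if a = 2 then (1:ZMod 2) else 0)) (x i) (h i)

/-- if `C₁ ⊆ C₂ ⊆ C₁^⊥` with `C₁` doubly even containing `𝟏`, and `C` is a
quaternary even code containing `𝟏` with `π(C) = ι⁻¹(C) = C₁`, then there exists a unique
quaternary even code `C'` containing `𝟏` with `C ⊆ C'`, `π(C') = C₁`, `ι⁻¹(C') = C₂`. -/
theorem stmt12 (n : ℕ) (hn8 : 8 ∣ n) (hn : 0 < n)
    (C1 C2 : Submodule (ZMod 2) (Fin n → ZMod 2))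
    (h12 : C1 ≤ C2)
    (h2d : (C2 : Set (Fin n → ZMod 2)) ⊆ dualSet (C1 : Set (Fin n → ZMod 2)))
    (hde : doublyEven (C1 : Set (Fin n → ZMod 2)))
    (hone1 : (fun _ => (1 : ZMod 2)) ∈ C1)
    (C : Submodule (ZMod 4) (Fin n → ZMod 4))
    (hev : evenCode (C : Set (Fin n → ZMod 4)))
    (honeC : (fun _ => (1 : ZMod 4)) ∈ C)
    (hres : res4 '' (C : Set (Fin n → ZMod 4)) = (C1 : Set (Fin n → ZMod 2)))
    (htor : iot4 ⁻¹' (C : Set (Fin n → ZMod 4)) = (C1 : Set (Fin n → ZMod 2))) :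
    ∃! C' : Submodule (ZMod 4) (Fin n → ZMod 4),
      evenCode (C' : Set (Fin n → ZMod 4)) ∧ (fun _ => (1 : ZMod 4)) ∈ C' ∧ C ≤ C' ∧
      res4 '' (C' : Set (Fin n → ZMod 4)) = (C1 : Set (Fin n → ZMod 2)) ∧
      iot4 ⁻¹' (C' : Set (Fin n → ZMod 4)) = (C2 : Set (Fin n → ZMod 2)) := by
  classical
  set C' := C ⊔ iotSub C2 with hC'def
  have hmem : ∀ x, x ∈ C' ↔ ∃ c ∈ C, ∃ w ∈ C2, x = c + iot4 w := by
    intro x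
    rw [hC'def, Submodule.mem_sup]
    constructor
    · rintro ⟨c, hc, t, ht, rfl⟩
      obtain ⟨w, hw, rfl⟩ := mem_iotSub.mp ht
      exact ⟨c, hc, w, hw, rfl⟩
    · rintro ⟨c, hc, w, hw, rfl⟩
      exact ⟨c, hc, iot4 w, mem_iotSub.mpr ⟨w, hw, rfl⟩, rfl⟩
  have hresC : ∀ c ∈ C, res4 c ∈ C1 := by
    intro c hc
    have : res4 c ∈ res4 '' (C : Set (Fin n → ZMod 4)) := ⟨c, hc, rfl⟩
    rw [hres] at this; exact this
  -- the key additivity for res4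
  have res4_add_iot : ∀ (c : Fin n → ZMod 4) (w : Fin n → ZMod 2),
      res4 (c + iot4 w) = res4 c := by
    intro c w
    funext i
    exact (by decide : ∀ (a : ZMod 4) (b : ZMod 2),
      ZMod.castHom (by norm_num : (2:ℕ)∣4) (ZMod 2) (a + 2 * ZMod.cast b)
        = ZMod.castHom (by norm_num : (2:ℕ)∣4) (ZMod 2) a) (c i) (w i)
  -- evenness of C'
  have hevC' : evenCode (C' : Set (Fin n → ZMod 4)) := by
    intro x hx
    obtain ⟨c, hc, w, hw, rfl⟩ := (hmem x).mp hx
    have hπc : res4 c ∈ C1 := hresC c hc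
    -- the count is even
    have hNcast : ((Finset.univ.filter
        (fun i => w i = 1 ∧ res4 c i = 0)).card : ZMod 2) = 0 := by
      rw [← Finset.sum_boole]
      have h2 : ∀ i : Fin n, (if w i = 1 ∧ res4 c i = 0 then (1:ZMod 2) else 0)
          = w i * (1 + res4 c i) :=
        fun i => (by decide : ∀ a b : ZMod 2,
          (if a = 1 ∧ b = 0 then (1:ZMod 2) else 0) = a * (1 + b)) (w i) (res4 c i)
      rw [Finset.sum_congr rfl (fun i _ => h2 i)]
      have ha : ∑ i, w i * res4 c i = (0:ZMod 2) := h2d hw _ hπc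
      have hb : ∑ i, w i * 1 = (0:ZMod 2) := by simpa using h2d hw _ hone1
      calc ∑ i, w i * (1 + res4 c i)
          = (∑ i, w i * 1) + ∑ i, w i * res4 c i := by
            rw [← Finset.sum_add_distrib]
            exact Finset.sum_congr rfl (fun i _ => by ring)
        _ = 0 := by rw [ha, hb, add_zero]
    obtain ⟨k, hk⟩ : 2 ∣ (Finset.univ.filter
        (fun i => w i = 1 ∧ res4 c i = 0)).card :=
      (ZMod.natCast_eq_zero_iff _ 2).mp hNcast
    obtain ⟨m, hm⟩ := hev c hc
    have hkey : ∀ i : Fin n, (ewt ((c + iot4 w) i) : ZMod 8)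
        = (ewt (c i) : ZMod 8) + 4 * (if w i = 1 ∧ res4 c i = 0 then 1 else 0) :=
      fun i => (by decide : ∀ (a : ZMod 4) (b : ZMod 2),
        (ewt (a + 2 * ZMod.cast b) : ZMod 8) = (ewt a : ZMod 8)
          + 4 * (if b = 1 ∧ (ZMod.castHom (by norm_num : (2:ℕ)∣4) (ZMod 2) a) = 0
            then 1 else 0)) (c i) (w i)
    have hcast : ((∑ i, ewt ((c + iot4 w) i) : ℕ) : ZMod 8) = 0 := by
      rw [Nat.cast_sum]
      calc (∑ i, (ewt ((c + iot4 w) i) : ZMod 8))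
          = ∑ i, ((ewt (c i) : ZMod 8)
              + 4 * (if w i = 1 ∧ res4 c i = 0 then 1 else 0)) :=
            Finset.sum_congr rfl (fun i _ => hkey i)
        _ = (∑ i, (ewt (c i) : ZMod 8))
              + 4 * ∑ i, (if w i = 1 ∧ res4 c i = 0 then (1:ZMod 8) else 0) := by
            rw [Finset.sum_add_distrib, Finset.mul_sum]
        _ = 0 := by
            rw [Finset.sum_boole, ← Nat.cast_sum, hm, hk]
            push_cast
            rw [show ((8:ZMod 8) * (m:ZMod 8) + 4 * (2 * (k:ZMod 8)))
                = (8:ZMod 8) * ((m:ZMod 8) + (k:ZMod 8)) by ring,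
              show (8:ZMod 8) = 0 by decide, zero_mul]
    exact (ZMod.natCast_eq_zero_iff _ 8).mp hcast
  have honeC' : (fun _ => (1 : ZMod 4)) ∈ C' := Submodule.mem_sup_left honeC
  have hCC' : C ≤ C' := le_sup_left
  have hresC' : res4 '' (C' : Set (Fin n → ZMod 4)) = (C1 : Set (Fin n → ZMod 2)) := by
    apply Set.Subset.antisymm
    · rintro y ⟨x, hx, rfl⟩
      obtain ⟨c, hc, w, hw, rfl⟩ := (hmem x).mp hx
      rw [res4_add_iot]
      exact hresC c hc
    · intro y hy
      rw [← hres] at hy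
      obtain ⟨c, hc, rfl⟩ := hy
      exact ⟨c, hCC' hc, rfl⟩
  have hww : ∀ w : Fin n → ZMod 2, w + w = 0 := by
    intro w; funext i; exact (by decide : ∀ a : ZMod 2, a + a = 0) (w i)
  have hiotww : ∀ w : Fin n → ZMod 2, iot4 w + iot4 w = 0 := by
    intro w; rw [← iot4_add', hww, iot4_zero']
  have htorC' : iot4 ⁻¹' (C' : Set (Fin n → ZMod 4)) = (C2 : Set (Fin n → ZMod 2)) := by
    apply Set.Subset.antisymm
    · intro v hv
      obtain ⟨c, hc, w, hw, heq⟩ := (hmem (iot4 v)).mp hv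
      have hcw : iot4 (v + w) = c := by
        rw [iot4_add', heq, add_assoc, hiotww, add_zero]
      have hvw1 : v + w ∈ C1 := by
        have : v + w ∈ iot4 ⁻¹' (C : Set (Fin n → ZMod 4)) := by
          show iot4 (v + w) ∈ (C : Set (Fin n → ZMod 4))
          rw [hcw]; exact hc
        rw [htor] at this; exact this
      have hvw2 : v + w ∈ C2 := h12 hvw1
      have : (v + w) + w ∈ C2 := C2.add_mem hvw2 hw
      rwa [add_assoc, hww, add_zero] at this
    · intro w hw
      show iot4 w ∈ C'
      exact (hmem (iot4 w)).mpr ⟨0, C.zero_mem, w, hw, (zero_add _).symm⟩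
  refine ⟨C', ⟨hevC', honeC', hCC', hresC', htorC'⟩, ?_⟩
  rintro D ⟨hDev, hDone, hCD, hDres, hDtor⟩
  apply le_antisymm
  · -- D ≤ C'
    intro x hx
    have hrx : res4 x ∈ res4 '' (C : Set (Fin n → ZMod 4)) := by
      rw [hres, ← hDres]; exact ⟨x, hx, rfl⟩
    obtain ⟨c, hc, hcx⟩ := hrx
    have hsub0 : ∀ i, res4 (x - c) i = 0 := by
      intro i
      have : res4 (x - c) i = res4 x i - res4 c i :=
        map_sub (ZMod.castHom (by norm_num : (2:ℕ)∣4) (ZMod 2)) (x i) (c i)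
      rw [this, show res4 c = res4 x from hcx, sub_self]
    obtain ⟨v, hv⟩ := exists_iot4 (x - c) hsub0
    have hivD : iot4 v ∈ D := by rw [← hv]; exact D.sub_mem hx (hCD hc)
    have hvC2 : v ∈ C2 := by
      have : v ∈ iot4 ⁻¹' (D : Set (Fin n → ZMod 4)) := hivD
      rw [hDtor] at this; exact this
    exact (hmem x).mpr ⟨c, hc, v, hvC2, by rw [← hv]; ring⟩
  · -- C' ≤ D
    rw [hC'def]
    refine sup_le hCD ?_
    intro t ht
    obtain ⟨w, hw, rfl⟩ := mem_iotSub.mp ht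
    have : w ∈ iot4 ⁻¹' (D : Set (Fin n → ZMod 4)) := by rw [hDtor]; exact hw
    exact this


end Paper
end

section
/- Let n be a positive integer divisible by 8 and let C_1, C_2 be binary codes of length n with C_1 ⊆ C_2 ⊆ C_1^⊥. If C_1 is doubly even, 𝟏 ∈ C_1, dim C_1 = k_1, and dim C_2 = k_1 + k_2, then the number of quaternary even codes C of length n containing an element of {±1}^n (i.e., a codeword all of whose coordinates are 1 or 3 in Z_4) such that π(C) = C_1 and ι^{-1}(C) = C_2 is 2^{(n−k_1−k_2) + (k_1−1)(2n−3k_1−2−2k_2)/2}. -/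
/-!
Fix a basis `g` of `C₁` with `g i₀ = 𝟏`. A quaternary code with residue code `C₁` and torsion
code `C₂` is generated by `2 C₂` and lifts `g i + 2 v i`, and it determines the classes of the
`v i` modulo `C₂`; so these codes correspond bijectively to `(𝔽₂ⁿ / C₂)^k₁`, a space of dimension
`k₁ (n - k₁ - k₂)`. As `C₂ ⊆ C₁^⊥`, such a code is even iff its lifted generators are even and
pairwise orthogonal, and these are affine conditions on the matrix `(g j ⬝ v i)`: one for each pair
`i < j` and one for each `i ≠ i₀`, the lift of `𝟏` having Euclidean weight `n ≡ 0 (mod 8)`. As the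
`g j` are independent, the linear part is surjective, so there are
`2 ^ (k₁ (n - k₁ - k₂) - k₁ (k₁ - 1) / 2 - (k₁ - 1))` solutions. Each of these codes contains a lift
of `𝟏`, which lies in `{±1}ⁿ`.
-/

open scoped BigOperators

namespace Paper

open Submodule

section Reduction

variable {ι : Type}

abbrev mod2 : ZMod 4 →+* ZMod 2 := ZMod.castHom (by norm_num : (2 : ℕ) ∣ 4) (ZMod 2)

instance : RingHomSurjective mod2 := ⟨by decide⟩

def res4L : (ι → ZMod 4) →ₛₗ[mod2] (ι → ZMod 2) where
  toFun := res4
  map_add' x y := funext fun i => map_add mod2 (x i) (y i)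
  map_smul' a x := funext fun i => map_mul mod2 a (x i)

@[simp] lemma res4L_apply (x : ι → ZMod 4) : res4L x = res4 x := rfl

def iot4Hom : (ι → ZMod 2) →+ (ι → ZMod 4) :=
  AddMonoidHom.mk' iot4 fun x y => funext fun i =>
    (by decide : ∀ a b : ZMod 2, (2 : ZMod 4) * ZMod.cast (a + b) =
      2 * ZMod.cast a + 2 * ZMod.cast b) (x i) (y i)

@[simp] lemma iot4Hom_apply (v : ι → ZMod 2) : iot4Hom v = iot4 v := rfl

lemma iot4_sub (v w : ι → ZMod 2) : iot4 (v - w) = iot4 v - iot4 w := map_sub iot4Hom v w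

lemma iot4_injective : Function.Injective (iot4 (ι := ι)) := fun v w h => funext fun i =>
  (by decide : ∀ a b : ZMod 2, (2 : ZMod 4) * ZMod.cast a = 2 * ZMod.cast b → a = b) _ _
    (congrFun h i)

lemma smul_iot4 (a : ZMod 4) (v : ι → ZMod 2) : a • iot4 v = iot4 (mod2 a • v) := funext fun i =>
  (by decide : ∀ (a : ZMod 4) (b : ZMod 2),
    a * (2 * ZMod.cast b) = (2 : ZMod 4) * ZMod.cast (mod2 a * b)) a (v i)

def lift4 (c : ι → ZMod 2) : ι → ZMod 4 := fun i => ZMod.cast (c i)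

lemma res4_lift4_add_iot4 (c v : ι → ZMod 2) : res4 (lift4 c + iot4 v) = c := funext fun i =>
  (by decide : ∀ a b : ZMod 2, mod2 (ZMod.cast a + 2 * ZMod.cast b) = a) (c i) (v i)

lemma res4_iot4 (v : ι → ZMod 2) : res4 (iot4 v) = 0 := funext fun i =>
  (by decide : ∀ b : ZMod 2, mod2 (2 * ZMod.cast b) = 0) (v i)

lemma exists_eq_lift4_add_iot4 (x : ι → ZMod 4) : ∃ v, x = lift4 (res4 x) + iot4 v := by
  choose v hv using fun i => (by decide : ∀ a : ZMod 4, ∃ b : ZMod 2,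
    a = ZMod.cast (mod2 a) + 2 * ZMod.cast b) (x i)
  exact ⟨v, funext hv⟩

lemma smul_lift4_add_iot4_of_mod2_eq_zero {a : ZMod 4} (ha : mod2 a = 0) (c v : ι → ZMod 2) :
    ∃ e : ZMod 2, a • (lift4 c + iot4 v) = iot4 (e • c) := by
  obtain ⟨e, rfl⟩ : ∃ e : ZMod 2, a = 2 * ZMod.cast e := by revert a ha; decide
  exact ⟨e, funext fun t => (by decide : ∀ e c b : ZMod 2, (2 * ZMod.cast e : ZMod 4) *
    (ZMod.cast c + 2 * ZMod.cast b) = 2 * ZMod.cast (e * c)) e (c t) (v t)⟩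

lemma exists_iot4_eq_of_res4_eq_zero {x : ι → ZMod 4} (hx : res4 x = 0) : ∃ u, iot4 u = x := by
  obtain ⟨u, hu⟩ := exists_eq_lift4_add_iot4 x
  refine ⟨u, ?_⟩
  rw [hu, hx, show lift4 (0 : ι → ZMod 2) = 0 from funext fun _ => ZMod.cast_zero, zero_add]

lemma exists_pm_one_mem_of_one_mem_image {C : Set (ι → ZMod 4)} (h : 1 ∈ res4 '' C) :
    ∃ z ∈ C, ∀ i, z i = 1 ∨ z i = -1 := by
  obtain ⟨z, hz, hz1⟩ := h
  exact ⟨z, hz, fun i =>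
    (by decide : ∀ u : ZMod 4, mod2 u = 1 → u = 1 ∨ u = -1) _ (congrFun hz1 i)⟩

def iot4Submodule (C : Submodule (ZMod 2) (ι → ZMod 2)) : Submodule (ZMod 4) (ι → ZMod 4) where
  carrier := iot4 '' C
  add_mem' := by
    rintro _ _ ⟨v, hv, rfl⟩ ⟨w, hw, rfl⟩
    exact ⟨v + w, C.add_mem hv hw, map_add iot4Hom v w⟩
  zero_mem' := ⟨0, C.zero_mem, map_zero iot4Hom⟩
  smul_mem' := by
    rintro a _ ⟨v, hv, rfl⟩
    exact ⟨mod2 a • v, C.smul_mem _ hv, (smul_iot4 a v).symm⟩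

@[simp] lemma coe_iot4Submodule (C : Submodule (ZMod 2) (ι → ZMod 2)) :
    (iot4Submodule C : Set (ι → ZMod 4)) = iot4 '' C := rfl

lemma le_of_le_of_image_res4_subset {C D : Submodule (ZMod 4) (ι → ZMod 4)} (hDC : D ≤ C)
    (hres : res4 '' (C : Set (ι → ZMod 4)) ⊆ res4 '' (D : Set (ι → ZMod 4)))
    (htor : iot4 ⁻¹' (C : Set (ι → ZMod 4)) ⊆ iot4 ⁻¹' (D : Set (ι → ZMod 4))) : C ≤ D := by
  intro z hz
  obtain ⟨y, hy, hyz⟩ := hres ⟨z, hz, rfl⟩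
  obtain ⟨u, hu⟩ := exists_iot4_eq_of_res4_eq_zero (x := z - y) (by
    rw [← res4L_apply, map_sub, res4L_apply, res4L_apply, hyz, sub_self])
  have hu' : u ∈ iot4 ⁻¹' (D : Set (ι → ZMod 4)) :=
    htor (show iot4 u ∈ C from hu ▸ sub_mem hz (hDC hy))
  rw [← sub_add_cancel z y, ← hu]
  exact add_mem hu' hy

end Reduction

section EuclideanWeight

variable {ι : Type} [Fintype ι]

def euclWt (x : ι → ZMod 4) : ℕ := ∑ i, ewt (x i)

lemma natCast_euclWt_add (x y : ι → ZMod 4) :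
    (euclWt (x + y) : ZMod 8) =
      euclWt x + euclWt y + 2 * ((∑ i, (x i).val * (y i).val : ℕ) : ZMod 8) := by
  simp only [euclWt, Nat.cast_sum, Nat.cast_mul, Finset.mul_sum, ← Finset.sum_add_distrib]
  exact Finset.sum_congr rfl fun i _ => (by decide : ∀ a b : ZMod 4,
    (ewt (a + b) : ZMod 8) = ewt a + ewt b + 2 * ((a.val : ZMod 8) * b.val)) (x i) (y i)

lemma natCast_sum_val_mul_val (x y : ι → ZMod 4) :
    ((∑ i, (x i).val * (y i).val : ℕ) : ZMod 4) = x ⬝ᵥ y := by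
  simp [dotProduct]

lemma dvd_euclWt_add_iff {x y : ι → ZMod 4} (hx : 8 ∣ euclWt x) (hy : 8 ∣ euclWt y) :
    8 ∣ euclWt (x + y) ↔ x ⬝ᵥ y = 0 := by
  rw [← natCast_sum_val_mul_val, ← ZMod.natCast_eq_zero_iff] at *
  rw [natCast_euclWt_add, hx, hy, zero_add, zero_add]
  have h (N : ℕ) : ((2 * N : ℕ) : ZMod 8) = 0 ↔ (N : ZMod 4) = 0 := by
    simp only [ZMod.natCast_eq_zero_iff]; omega
  exact_mod_cast h _

lemma dvd_euclWt_smul {x : ι → ZMod 4} (hx : 8 ∣ euclWt x) (a : ZMod 4) : 8 ∣ euclWt (a • x) := by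
  have h : (euclWt (a • x) : ZMod 8) = (a.val ^ 2 : ℕ) * euclWt x := by
    simp only [euclWt, Nat.cast_sum, Finset.mul_sum]
    exact Finset.sum_congr rfl fun i _ => (by decide : ∀ a b : ZMod 4,
      (ewt (a * b) : ZMod 8) = ((a.val ^ 2 : ℕ) : ZMod 8) * ewt b) a (x i)
  rw [← ZMod.natCast_eq_zero_iff] at hx ⊢
  rw [h, hx, mul_zero]

lemma dotProduct_self_eq_zero {x : ι → ZMod 4} (hx : 8 ∣ euclWt x) : x ⬝ᵥ x = 0 :=
  (dvd_euclWt_add_iff hx hx).mp (by simpa [two_smul] using dvd_euclWt_smul hx 2)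

lemma dotProduct_eq_zero_of_mem_span {R : Type*} [CommSemiring R] {S : Set (ι → R)}
    (hS : ∀ x ∈ S, ∀ y ∈ S, x ⬝ᵥ y = 0) {x y : ι → R} (hx : x ∈ span R S) (hy : y ∈ span R S) :
    x ⬝ᵥ y = 0 := by
  induction hx, hy using Submodule.span_induction₂ with
  | mem_mem x y hx hy => exact hS x hx y hy
  | zero_left => simp
  | zero_right => simp
  | add_left => simp_all [add_dotProduct]
  | add_right => simp_all [dotProduct_add]
  | smul_left => simp_all
  | smul_right => simp_all

lemma evenCode_span_iff (S : Set (ι → ZMod 4)) :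
    evenCode (span (ZMod 4) S : Set (ι → ZMod 4)) ↔
      (∀ x ∈ S, 8 ∣ euclWt x) ∧ ∀ x ∈ S, ∀ y ∈ S, x ⬝ᵥ y = 0 := by
  refine ⟨fun h => ⟨fun x hx => h x (subset_span hx), fun x hx y hy => ?_⟩, fun ⟨hwt, horth⟩ => ?_⟩
  · exact (dvd_euclWt_add_iff (h x (subset_span hx)) (h y (subset_span hy))).mp
      (h _ (add_mem (subset_span hx) (subset_span hy)))
  · intro x hx
    induction hx using Submodule.span_induction with
    | mem x hx => exact hwt x hx
    | zero => simp [ewt]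
    | add x y hx hy ihx ihy =>
      exact (dvd_euclWt_add_iff ihx ihy).mpr (dotProduct_eq_zero_of_mem_span horth hx hy)
    | smul a x _ ihx => exact dvd_euclWt_smul ihx a

end EuclideanWeight

section LiftCode

variable {ι : Type} {κ : Type*} (C2 : Submodule (ZMod 2) (ι → ZMod 2)) (g : κ → ι → ZMod 2)

def liftGen (v : κ → ι → ZMod 2) (i : κ) : ι → ZMod 4 := lift4 (g i) + iot4 (v i)

def liftCode (v : κ → ι → ZMod 2) : Submodule (ZMod 4) (ι → ZMod 4) :=
  span (ZMod 4) (Set.range (liftGen g v)) ⊔ iot4Submodule C2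

variable {C2 g}

lemma liftGen_mem_liftCode (v : κ → ι → ZMod 2) (i : κ) : liftGen g v i ∈ liftCode C2 g v :=
  mem_sup_left (subset_span ⟨i, rfl⟩)

lemma iot4_mem_liftCode (v : κ → ι → ZMod 2) {w : ι → ZMod 2} (hw : w ∈ C2) :
    iot4 w ∈ liftCode C2 g v :=
  mem_sup_right ⟨w, hw, rfl⟩

lemma map_res4L_liftCode (v : κ → ι → ZMod 2) :
    map res4L (liftCode C2 g v) = span (ZMod 2) (Set.range g) := by
  have htor : map res4L (iot4Submodule C2) = ⊥ := by
    rw [eq_bot_iff]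
    rintro _ ⟨_, ⟨w, -, rfl⟩, rfl⟩
    exact res4_iot4 w
  rw [liftCode, Submodule.map_sup, htor, sup_bot_eq, map_span, ← Set.range_comp]
  congr 2
  exact funext fun i => res4_lift4_add_iot4 (g i) (v i)

lemma liftGen_sub_liftGen (v v' : κ → ι → ZMod 2) (i : κ) :
    liftGen g v i - liftGen g v' i = iot4 (v i - v' i) := by
  rw [liftGen, liftGen, iot4_sub]; abel

lemma liftCode_le_liftCode {v v' : κ → ι → ZMod 2} (h : ∀ i, v i - v' i ∈ C2) :
    liftCode C2 g v ≤ liftCode C2 g v' := by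
  refine sup_le (span_le.mpr ?_) le_sup_right
  rintro _ ⟨i, rfl⟩
  rw [← sub_add_cancel (liftGen g v i) (liftGen g v' i), liftGen_sub_liftGen]
  exact add_mem (iot4_mem_liftCode v' (h i)) (liftGen_mem_liftCode v' i)

lemma liftCode_eq_span (v : κ → ι → ZMod 2) :
    liftCode C2 g v = span (ZMod 4) (Set.range (liftGen g v) ∪ iot4 '' C2) := by
  rw [span_union, liftCode, ← coe_iot4Submodule, span_eq]

variable [Fintype κ]

lemma mem_liftCode {v : κ → ι → ZMod 2} {x : ι → ZMod 4} :
    x ∈ liftCode C2 g v ↔ ∃ a : κ → ZMod 4, ∃ w ∈ C2, x = ∑ i, a i • liftGen g v i + iot4 w := by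
  rw [liftCode, mem_sup]
  constructor
  · rintro ⟨_, hy, _, ⟨w, hw, rfl⟩, rfl⟩
    obtain ⟨a, rfl⟩ := (mem_span_range_iff_exists_fun _).mp hy
    exact ⟨a, w, hw, rfl⟩
  · rintro ⟨a, w, hw, rfl⟩
    exact ⟨_, (mem_span_range_iff_exists_fun _).mpr ⟨a, rfl⟩, _, ⟨w, hw, rfl⟩, rfl⟩

/-- A codeword `2z` uses the lifted generators with even coefficients only, as the `g i` are
independent modulo 2. -/
lemma preimage_iot4_liftCode (hind : LinearIndependent (ZMod 2) g) (hg : ∀ i, g i ∈ C2)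
    (v : κ → ι → ZMod 2) : iot4 ⁻¹' (liftCode C2 g v : Set (ι → ZMod 4)) = C2 := by
  ext z
  refine ⟨fun hz => ?_, fun hz => iot4_mem_liftCode v hz⟩
  obtain ⟨a, w, hw, heq⟩ := mem_liftCode.mp (SetLike.mem_coe.mp hz)
  have hres : ∑ i, mod2 (a i) • g i = 0 := by
    have := congrArg res4L heq
    simp only [res4L_apply, res4_iot4, map_add, map_sum, LinearMap.map_smulₛₗ] at this
    simpa [liftGen, res4_lift4_add_iot4] using this.symm
  have hred := Fintype.linearIndependent_iff.mp hind _ hres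
  choose e he using fun i => smul_lift4_add_iot4_of_mod2_eq_zero (hred i) (g i) (v i)
  have hz' : iot4 z = iot4 (∑ i, e i • g i + w) := by
    show _ = iot4Hom _
    simp only [map_add, map_sum, iot4Hom_apply, heq, liftGen, he]
  rw [SetLike.mem_coe, iot4_injective hz']
  exact C2.add_mem (C2.sum_mem fun i _ => C2.smul_mem _ (hg i)) hw

lemma liftCode_eq_liftCode_iff (hind : LinearIndependent (ZMod 2) g) (hg : ∀ i, g i ∈ C2)
    {v v' : κ → ι → ZMod 2} : liftCode C2 g v = liftCode C2 g v' ↔ ∀ i, v i - v' i ∈ C2 := by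
  refine ⟨fun h i => ?_, fun h => le_antisymm (liftCode_le_liftCode h)
    (liftCode_le_liftCode fun i => by simpa using C2.neg_mem (h i))⟩
  rw [← SetLike.mem_coe, ← preimage_iot4_liftCode hind hg v', Set.mem_preimage,
    ← liftGen_sub_liftGen]
  exact sub_mem (h ▸ liftGen_mem_liftCode v i) (liftGen_mem_liftCode v' i)

lemma liftCode_out_injective (hind : LinearIndependent (ZMod 2) g) (hg : ∀ i, g i ∈ C2) :
    Function.Injective fun s : κ → (ι → ZMod 2) ⧸ C2 => liftCode C2 g fun i => (s i).out := by
  intro s s' h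
  funext i
  rw [← Quotient.out_eq (s i), ← Quotient.out_eq (s' i)]
  exact (Submodule.Quotient.eq C2).mpr ((liftCode_eq_liftCode_iff hind hg).mp h i)

lemma exists_eq_liftCode (hind : LinearIndependent (ZMod 2) g) (hg : ∀ i, g i ∈ C2)
    {C : Submodule (ZMod 4) (ι → ZMod 4)}
    (hres : res4 '' (C : Set (ι → ZMod 4)) = span (ZMod 2) (Set.range g))
    (htor : iot4 ⁻¹' (C : Set (ι → ZMod 4)) = C2) : ∃ v, C = liftCode C2 g v := by
  have hlift (i : κ) : ∃ u, lift4 (g i) + iot4 u ∈ C := by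
    obtain ⟨x, hx, hxg⟩ : g i ∈ res4 '' (C : Set (ι → ZMod 4)) := hres ▸ subset_span ⟨i, rfl⟩
    obtain ⟨u, hu⟩ := exists_eq_lift4_add_iot4 x
    exact ⟨u, by rwa [← hxg, ← hu]⟩
  choose v hv using hlift
  have hle : liftCode C2 g v ≤ C := by
    refine sup_le (span_le.mpr (Set.range_subset_iff.mpr hv)) ?_
    rintro _ ⟨w, hw, rfl⟩
    exact (htor ▸ hw : w ∈ iot4 ⁻¹' (C : Set (ι → ZMod 4)))
  refine ⟨v, le_antisymm (le_of_le_of_image_res4_subset hle ?_ ?_) hle⟩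
  · rw [hres, ← map_res4L_liftCode (C2 := C2) v, map_coe]
    rfl
  · rw [htor, preimage_iot4_liftCode hind hg]

end LiftCode

section GeneratorConditions

variable {ι : Type} [Fintype ι]

lemma hammingNorm_eq_sum_val (x : ι → ZMod 2) : hammingNorm x = ∑ t, (x t).val := by
  rw [hammingNorm, Finset.card_filter]
  exact Finset.sum_congr rfl fun t _ =>
    (by decide : ∀ a : ZMod 2, (if a ≠ 0 then 1 else 0) = a.val) (x t)

lemma natCast_hammingNorm (x : ι → ZMod 2) : (hammingNorm x : ZMod 2) = ∑ t, x t := by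
  simp [hammingNorm_eq_sum_val]

lemma euclWt_iot4 (w : ι → ZMod 2) : euclWt (iot4 w) = 4 * hammingNorm w := by
  rw [euclWt, hammingNorm_eq_sum_val, Finset.mul_sum]
  exact Finset.sum_congr rfl fun t _ =>
    (by decide : ∀ a : ZMod 2, ewt (2 * ZMod.cast a) = 4 * a.val) (w t)

lemma euclWt_lift4_one_add_iot4 (v : ι → ZMod 2) : euclWt (lift4 1 + iot4 v) = Fintype.card ι := by
  rw [euclWt, Fintype.card_eq_sum_ones]
  exact Finset.sum_congr rfl fun t _ =>
    (by decide : ∀ b : ZMod 2, ewt (ZMod.cast (1 : ZMod 2) + 2 * ZMod.cast b) = 1) (v t)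

lemma iot4_dotProduct_iot4 (v w : ι → ZMod 2) : iot4 v ⬝ᵥ iot4 w = 0 :=
  Finset.sum_eq_zero fun t _ => (by decide : ∀ a b : ZMod 2,
    (2 * ZMod.cast a : ZMod 4) * (2 * ZMod.cast b) = 0) (v t) (w t)

lemma lift4_add_iot4_dotProduct_iot4 {c w : ι → ZMod 2} (hcw : c ⬝ᵥ w = 0) (v : ι → ZMod 2) :
    (lift4 c + iot4 v) ⬝ᵥ iot4 w = 0 := by
  have key : (lift4 c + iot4 v) ⬝ᵥ iot4 w = ((2 * hammingNorm (c * w) : ℕ) : ZMod 4) := by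
    simp only [dotProduct, hammingNorm_eq_sum_val, Finset.mul_sum, Nat.cast_sum]
    exact Finset.sum_congr rfl fun t _ => (by decide : ∀ a b e : ZMod 2,
      (ZMod.cast a + 2 * ZMod.cast b : ZMod 4) * (2 * ZMod.cast e) =
        ((2 * (a * e).val : ℕ) : ZMod 4)) (c t) (v t) (w t)
  have heven : ((hammingNorm (c * w) : ℕ) : ZMod 2) = 0 := by
    rw [natCast_hammingNorm, ← hcw]; rfl
  rw [key, ZMod.natCast_eq_zero_iff]
  rw [ZMod.natCast_eq_zero_iff] at heven
  omega

lemma dvd_euclWt_lift4_add_iot4_iff {c : ι → ZMod 2} (hc : 4 ∣ hammingNorm c) (v : ι → ZMod 2) :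
    8 ∣ euclWt (lift4 c + iot4 v) ↔ (1 + c) ⬝ᵥ v = ((hammingNorm c / 4 : ℕ) : ZMod 2) := by
  have key : (euclWt (lift4 c + iot4 v) : ZMod 8) =
      ((hammingNorm c + 4 * hammingNorm ((1 + c) * v) : ℕ) : ZMod 8) := by
    simp only [euclWt, hammingNorm_eq_sum_val, Finset.mul_sum, ← Finset.sum_add_distrib,
      Nat.cast_sum]
    exact Finset.sum_congr rfl fun t _ => (by decide : ∀ a b : ZMod 2,
      ((ewt (ZMod.cast a + 2 * ZMod.cast b) : ℕ) : ZMod 8) =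
        ((a.val + 4 * ((1 + a) * b).val : ℕ) : ZMod 8)) (c t) (v t)
  have hdot : (1 + c) ⬝ᵥ v = (hammingNorm ((1 + c) * v) : ZMod 2) := by
    rw [natCast_hammingNorm]; rfl
  rw [← ZMod.natCast_eq_zero_iff, key, ZMod.natCast_eq_zero_iff, hdot,
    ZMod.natCast_eq_natCast_iff']
  omega

lemma lift4_add_iot4_dotProduct_eq_zero_iff {c c' : ι → ZMod 2} (h : 2 ∣ hammingNorm (c * c'))
    (v v' : ι → ZMod 2) :
    (lift4 c + iot4 v) ⬝ᵥ (lift4 c' + iot4 v') = 0 ↔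
      c ⬝ᵥ v' + c' ⬝ᵥ v = ((hammingNorm (c * c') / 2 : ℕ) : ZMod 2) := by
  have key : (lift4 c + iot4 v) ⬝ᵥ (lift4 c' + iot4 v') =
      ((hammingNorm (c * c') + 2 * hammingNorm (c * v' + c' * v) : ℕ) : ZMod 4) := by
    simp only [dotProduct, hammingNorm_eq_sum_val, Finset.mul_sum, ← Finset.sum_add_distrib,
      Nat.cast_sum]
    exact Finset.sum_congr rfl fun t _ => (by decide : ∀ a b a' b' : ZMod 2,
      (ZMod.cast a + 2 * ZMod.cast b : ZMod 4) * (ZMod.cast a' + 2 * ZMod.cast b') =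
        (((a * a').val + 2 * (a * b' + a' * b).val : ℕ) : ZMod 4)) (c t) (v t) (c' t) (v' t)
  have hdot : c ⬝ᵥ v' + c' ⬝ᵥ v = (hammingNorm (c * v' + c' * v) : ZMod 2) := by
    rw [natCast_hammingNorm, dotProduct, dotProduct, ← Finset.sum_add_distrib]; rfl
  rw [key, ZMod.natCast_eq_zero_iff, hdot, ZMod.natCast_eq_natCast_iff']
  omega

end GeneratorConditions

section EvenLiftCode

variable {ι : Type} {κ : Type*} [Fintype ι] {C2 : Submodule (ZMod 2) (ι → ZMod 2)}
  {g : κ → ι → ZMod 2}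

lemma evenCode_liftCode_iff [LinearOrder κ] (hperp : ∀ w ∈ C2, ∀ i, g i ⬝ᵥ w = 0) {i0 : κ}
    (hg0 : g i0 = 1) (v : κ → ι → ZMod 2) :
    evenCode (liftCode C2 g v : Set (ι → ZMod 4)) ↔
      (∀ i, 8 ∣ euclWt (liftGen g v i)) ∧ ∀ i j, i < j → liftGen g v i ⬝ᵥ liftGen g v j = 0 := by
  have hiot (w : ι → ZMod 2) (hw : w ∈ C2) : 8 ∣ euclWt (iot4 w) := by
    have h := hperp w hw i0
    rw [hg0, one_dotProduct, ← natCast_hammingNorm, ZMod.natCast_eq_zero_iff] at h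
    rw [euclWt_iot4]
    omega
  have hcross (i : κ) (w : ι → ZMod 2) (hw : w ∈ C2) : liftGen g v i ⬝ᵥ iot4 w = 0 :=
    lift4_add_iot4_dotProduct_iot4 (hperp w hw i) (v i)
  rw [liftCode_eq_span, evenCode_span_iff]
  constructor
  · rintro ⟨hwt, horth⟩
    exact ⟨fun i => hwt _ (.inl ⟨i, rfl⟩), fun i j _ => horth _ (.inl ⟨i, rfl⟩) _ (.inl ⟨j, rfl⟩)⟩
  · rintro ⟨hwt, horth⟩
    refine ⟨?_, ?_⟩
    · rintro _ (⟨i, rfl⟩ | ⟨w, hw, rfl⟩)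
      exacts [hwt i, hiot w hw]
    · rintro _ (⟨i, rfl⟩ | ⟨w, hw, rfl⟩) _ (⟨j, rfl⟩ | ⟨w', hw', rfl⟩)
      · rcases lt_trichotomy i j with h | rfl | h
        · exact horth i j h
        · exact dotProduct_self_eq_zero (hwt i)
        · rw [dotProduct_comm]; exact horth j i h
      · exact hcross i w' hw'
      · rw [dotProduct_comm]; exact hcross j w hw
      · exact iot4_dotProduct_iot4 w w'

end EvenLiftCode

section Gram

variable {K ι κ : Type*} [CommRing K] [Fintype ι] {C : Submodule K (ι → K)} {g : κ → ι → K}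

def dotQuot (hperp : ∀ w ∈ C, ∀ j, g j ⬝ᵥ w = 0) : ((ι → K) ⧸ C) →ₗ[K] (κ → K) :=
  C.liftQ (Matrix.of g).mulVecLin fun w hw => LinearMap.mem_ker.mpr (funext (hperp w hw))

def gram (hperp : ∀ w ∈ C, ∀ j, g j ⬝ᵥ w = 0) : (κ → (ι → K) ⧸ C) →ₗ[K] (κ → κ → K) :=
  (dotQuot hperp).compLeft κ

end Gram

section GramSurjective

variable {K ι κ : Type*} [Field K] [Fintype ι] [Fintype κ] {C : Submodule K (ι → K)}
  {g : κ → ι → K}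

lemma surjective_mulVecLin_of_linearIndependent (hind : LinearIndependent K g) :
    Function.Surjective (Matrix.of g).mulVecLin := by
  rw [← LinearMap.range_eq_top]
  apply Submodule.eq_top_of_finrank_eq
  rw [Module.finrank_fintype_fun_eq_card]
  exact hind.rank_matrix

lemma dotQuot_surjective (hperp : ∀ w ∈ C, ∀ j, g j ⬝ᵥ w = 0) (hind : LinearIndependent K g) :
    Function.Surjective (dotQuot hperp) := by
  rw [← LinearMap.range_eq_top, dotQuot, range_liftQ, LinearMap.range_eq_top]
  exact surjective_mulVecLin_of_linearIndependent hind

lemma gram_surjective (hperp : ∀ w ∈ C, ∀ j, g j ⬝ᵥ w = 0) (hind : LinearIndependent K g) :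
    Function.Surjective (gram hperp) :=
  (dotQuot_surjective hperp hind).comp_left

lemma card_le_finrank_quotient (hperp : ∀ w ∈ C, ∀ j, g j ⬝ᵥ w = 0)
    (hind : LinearIndependent K g) : Fintype.card κ ≤ Module.finrank K ((ι → K) ⧸ C) := by
  rw [← Module.finrank_fintype_fun_eq_card (R := K)]
  exact LinearMap.finrank_le_finrank_of_surjective (dotQuot_surjective hperp hind)

end GramSurjective

section ConditionMap

variable {κ : Type*} [LinearOrder κ]

/-- The weight condition for the lift of `g i0 = 𝟏` holds automatically; leaving it out makes
`condMap` surjective. -/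
abbrev CondIndex (κ : Type*) [LinearOrder κ] (i0 : κ) : Type _ :=
  {p : κ × κ // p.1 < p.2} ⊕ {i : κ // i ≠ i0}

def condMap (K : Type*) [CommRing K] (i0 : κ) : (κ → κ → K) →ₗ[K] (CondIndex κ i0 → K) where
  toFun M := Sum.elim (fun p => M p.1.1 p.1.2 + M p.1.2 p.1.1) (fun i => M i i0 + M i i)
  map_add' M N := by
    ext (p | i) <;> simp only [Pi.add_apply, Sum.elim_inl, Sum.elim_inr] <;> ring
  map_smul' a M := by
    ext (p | i) <;>
      simp only [Pi.smul_apply, smul_eq_mul, Sum.elim_inl, Sum.elim_inr, RingHom.id_apply] <;> ring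

lemma condMap_surjective (K : Type*) [CommRing K] (i0 : κ) :
    Function.Surjective (condMap K i0) := by
  intro t
  -- the pair conditions fix the part above the diagonal, the weight conditions the diagonal
  let U (i j : κ) : K := if h : i < j then t (.inl ⟨(i, j), h⟩) else 0
  let d (i : κ) : K := if h : i ≠ i0 then t (.inr ⟨i, h⟩) - U i i0 else 0
  refine ⟨fun i j => U i j + if j = i then d i else 0, ?_⟩
  ext (⟨⟨i, j⟩, hij⟩ | ⟨i, hi⟩)
  · replace hij : i < j := hij
    simp [condMap, U, hij, hij.ne, hij.ne', not_lt_of_gt hij]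
  · simp [condMap, U, d, hi, Ne.symm hi]

variable {ι : Type} [Fintype ι]

def condTarget (g : κ → ι → ZMod 2) (i0 : κ) : CondIndex κ i0 → ZMod 2 :=
  Sum.elim (fun p => ((hammingNorm (g p.1.1 * g p.1.2) / 2 : ℕ) : ZMod 2))
    (fun i => ((hammingNorm (g i) / 4 : ℕ) : ZMod 2))

lemma evenCode_liftCode_iff_condMap {C2 : Submodule (ZMod 2) (ι → ZMod 2)} {g : κ → ι → ZMod 2}
    (hg : ∀ i, g i ∈ C2) (hperp : ∀ w ∈ C2, ∀ i, g i ⬝ᵥ w = 0) {i0 : κ} (hg0 : g i0 = 1)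
    (hde : ∀ i, 4 ∣ hammingNorm (g i)) (h8 : 8 ∣ Fintype.card ι) (v : κ → ι → ZMod 2) :
    evenCode (liftCode C2 g v : Set (ι → ZMod 4)) ↔
      condMap (ZMod 2) i0 (gram hperp fun i => Submodule.Quotient.mk (v i)) = condTarget g i0 := by
  have hpair (i j : κ) : 2 ∣ hammingNorm (g i * g j) := by
    rw [← ZMod.natCast_eq_zero_iff, natCast_hammingNorm]
    exact hperp _ (hg j) i
  rw [evenCode_liftCode_iff hperp hg0, and_comm, funext_iff, Sum.forall]
  simp only [Subtype.forall, Prod.forall]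
  refine and_congr (forall₃_congr fun i j hij => ?_) ⟨fun h i hi => ?_, fun h i => ?_⟩
  · rw [liftGen, liftGen, lift4_add_iot4_dotProduct_eq_zero_iff (hpair i j), add_comm]
    rfl
  · have := (dvd_euclWt_lift4_add_iot4_iff (hde i) (v i)).mp (h i)
    rwa [← hg0, add_dotProduct] at this
  · by_cases hi : i = i0
    · rw [hi, liftGen, hg0, euclWt_lift4_one_add_iot4]
      exact h8
    · rw [liftGen, dvd_euclWt_lift4_add_iot4_iff (hde i), ← hg0, add_dotProduct]
      exact h i hi

end ConditionMap

section Counting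

lemma ncard_preimage_singleton_of_surjective {K V W : Type*} [Field K] [Finite K]
    [AddCommGroup V] [Module K V] [Module.Finite K V] [AddCommGroup W] [Module K W]
    [Module.Finite K W] {L : V →ₗ[K] W} (hL : Function.Surjective L) (w : W) :
    (L ⁻¹' {w}).ncard = Nat.card K ^ (Module.finrank K V - Module.finrank K W) := by
  rw [← Nat.card_coe_set_eq]
  refine (Nat.card_congr
    (AddMonoidHom.fiberEquivKerOfSurjective (f := L.toAddMonoidHom) hL w)).trans ?_
  rw [← LinearMap.finrank_range_add_finrank_ker L, LinearMap.range_eq_top.mpr hL, finrank_top,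
    Nat.add_sub_cancel_left, ← Module.natCard_eq_pow_finrank]
  rfl

lemma card_condIndex {κ : Type*} [Fintype κ] [LinearOrder κ] (i0 : κ) :
    Fintype.card (CondIndex κ i0) = (Fintype.card κ).choose 2 + (Fintype.card κ - 1) := by
  simp [Fintype.card_subtype, Fintype.card_product_filter_lt, Finset.filter_ne',
    Finset.card_erase_of_mem]

lemma count_exponent_eq {n k k2 d : ℕ} (hn : d + (k + k2) = n) (hk : 1 ≤ k) (hkd : k ≤ d) :
    k * d - (k.choose 2 + (k - 1)) =
      (n - k - k2) + (k - 1) * (2 * n - 3 * k - 2 - 2 * k2) / 2 := by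
  obtain rfl | hk2 := hk.eq_or_lt
  · rw [Nat.sub_self, zero_mul, Nat.zero_div, Nat.choose_eq_zero_of_lt one_lt_two]
    omega
  obtain ⟨b, rfl⟩ : ∃ b, k = b + 2 := ⟨k - 2, by omega⟩
  obtain ⟨e, rfl⟩ : ∃ e, d = b + 2 + e := ⟨d - (b + 2), by omega⟩
  have hc : (b + 1) * b = (b + 1).choose 2 * 2 := by simpa using Nat.add_one_mul_choose_eq b 1
  have hc' : (b + 2).choose 2 = (b + 1).choose 2 + (b + 1) := by
    rw [Nat.choose_succ_succ', Nat.choose_one_right, add_comm]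
  rw [show n - (b + 2) - k2 = b + 2 + e by omega, show b + 2 - 1 = b + 1 by omega,
    show 2 * n - 3 * (b + 2) - 2 - 2 * k2 = b + 2 * e by omega,
    show (b + 1) * (b + 2 * e) = 2 * ((b + 1).choose 2 + (b + 1) * e) by linarith,
    Nat.mul_div_cancel_left _ two_pos, hc']
  apply Nat.sub_eq_of_eq_add
  linarith

end Counting

lemma exists_basis_fin_of_mem {K V : Type*} [Field K] [AddCommGroup V] [Module K V]
    {W : Submodule K V} [FiniteDimensional K W] {k : ℕ} (hk : Module.finrank K W = k) {x : V}
    (hx : x ∈ W) (hx0 : x ≠ 0) :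
    ∃ (g : Fin k → V) (i0 : Fin k),
      LinearIndependent K g ∧ span K (Set.range g) = W ∧ g i0 = x := by
  have hli : LinearIndepOn K id ({⟨x, hx⟩} : Set W) :=
    (linearIndepOn_singleton_iff K).mpr (by simpa [Subtype.ext_iff] using hx0)
  let B := Module.Basis.extend hli
  let e := B.indexEquiv ((Module.finBasis K W).reindex (finCongr hk))
  let b := B.reindex e
  refine ⟨fun i => b i, e ⟨⟨x, hx⟩, hli.subset_extend _ rfl⟩,
    b.linearIndependent.map' W.subtype (ker_subtype W), ?_, ?_⟩
  · have hrange : Set.range (fun i => (b i : V)) = W.subtype '' Set.range b := by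
      rw [← Set.range_comp]; rfl
    rw [hrange, span_image, b.span_eq, map_subtype_top]
  · simp [b, B]

section Parametrization

variable {ι : Type} {κ : Type*} [Fintype ι] [Fintype κ] [LinearOrder κ]
  {C2 : Submodule (ZMod 2) (ι → ZMod 2)} {g : κ → ι → ZMod 2}

lemma setOf_evenCode_eq_image_liftCode (hind : LinearIndependent (ZMod 2) g) (hg : ∀ i, g i ∈ C2)
    (hperp : ∀ w ∈ C2, ∀ i, g i ⬝ᵥ w = 0) {i0 : κ} (hg0 : g i0 = 1)
    (hde : ∀ i, 4 ∣ hammingNorm (g i)) (h8 : 8 ∣ Fintype.card ι) :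
    {C : Submodule (ZMod 4) (ι → ZMod 4) |
        evenCode (C : Set (ι → ZMod 4)) ∧
        (∃ z ∈ C, ∀ i, z i = 1 ∨ z i = -1) ∧
        res4 '' (C : Set (ι → ZMod 4)) = span (ZMod 2) (Set.range g) ∧
        iot4 ⁻¹' (C : Set (ι → ZMod 4)) = C2} =
      (fun s => liftCode C2 g fun i => (s i).out) ''
        ((condMap (ZMod 2) i0 ∘ₗ gram hperp) ⁻¹' {condTarget g i0}) := by
  have hres (v : κ → ι → ZMod 2) :
      res4 '' (liftCode C2 g v : Set (ι → ZMod 4)) = span (ZMod 2) (Set.range g) := by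
    rw [← map_res4L_liftCode v, map_coe]
    rfl
  ext C
  constructor
  · rintro ⟨hev, -, hresC, htor⟩
    obtain ⟨v, rfl⟩ := exists_eq_liftCode hind hg hresC htor
    refine ⟨fun i => Submodule.Quotient.mk (v i), ?_, ?_⟩
    · exact (evenCode_liftCode_iff_condMap hg hperp hg0 hde h8 v).mp hev
    · refine (liftCode_eq_liftCode_iff hind hg).mpr fun i => ?_
      exact (Submodule.Quotient.eq C2).mp (Quotient.out_eq _)
  · rintro ⟨s, hs, rfl⟩
    refine ⟨(evenCode_liftCode_iff_condMap hg hperp hg0 hde h8 _).mpr ?_,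
      exists_pm_one_mem_of_one_mem_image ?_, hres _, preimage_iot4_liftCode hind hg _⟩
    · simpa [Quotient.out_eq] using hs
    · rw [hres, ← hg0]
      exact subset_span ⟨i0, rfl⟩

end Parametrization

/-- with `C₁ ⊆ C₂ ⊆ C₁^⊥`, `C₁` doubly even containing `𝟏`, `dim C₁ = k₁`,
`dim C₂ = k₁ + k₂`, the number of quaternary even codes `C` containing an element of `{±1}^n`
with `π(C) = C₁` and `ι⁻¹(C) = C₂` is `2^{(n−k₁−k₂)+(k₁−1)(2n−3k₁−2−2k₂)/2}`. -/
theorem stmt15 (n k1 k2 : ℕ) (hn8 : 8 ∣ n) (hn : 0 < n)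
    (C1 C2 : Submodule (ZMod 2) (Fin n → ZMod 2))
    (h12 : C1 ≤ C2)
    (h2d : (C2 : Set (Fin n → ZMod 2)) ⊆ dualSet (C1 : Set (Fin n → ZMod 2)))
    (hde : doublyEven (C1 : Set (Fin n → ZMod 2)))
    (hone1 : (fun _ => (1 : ZMod 2)) ∈ C1)
    (hdim1 : Module.finrank (ZMod 2) C1 = k1)
    (hdim2 : Module.finrank (ZMod 2) C2 = k1 + k2) :
    {C : Submodule (ZMod 4) (Fin n → ZMod 4) |
        evenCode (C : Set (Fin n → ZMod 4)) ∧
        (∃ z ∈ C, ∀ i, z i = 1 ∨ z i = -1) ∧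
        res4 '' (C : Set (Fin n → ZMod 4)) = (C1 : Set (Fin n → ZMod 2)) ∧
        iot4 ⁻¹' (C : Set (Fin n → ZMod 4)) = (C2 : Set (Fin n → ZMod 2))}.ncard
      = 2 ^ ((n - k1 - k2) + (k1 - 1) * (2 * n - 3 * k1 - 2 - 2 * k2) / 2) := by
  obtain ⟨g, i0, hind, hspan, hg0⟩ :=
    exists_basis_fin_of_mem hdim1 hone1 fun h => one_ne_zero (congrFun h ⟨0, hn⟩)
  have hgC1 (i : Fin k1) : g i ∈ C1 := hspan ▸ subset_span ⟨i, rfl⟩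
  have hperp : ∀ w ∈ C2, ∀ i, g i ⬝ᵥ w = 0 := fun w hw i => by
    rw [dotProduct_comm]
    exact h2d hw _ (hgC1 i)
  have hquot : Module.finrank (ZMod 2) ((Fin n → ZMod 2) ⧸ C2) + (k1 + k2) = n := by
    rw [← hdim2, Submodule.finrank_quotient_add_finrank, Module.finrank_fin_fun]
  have hk1 : k1 ≤ Module.finrank (ZMod 2) ((Fin n → ZMod 2) ⧸ C2) := by
    simpa using card_le_finrank_quotient hperp hind
  have hcodes := setOf_evenCode_eq_image_liftCode hind (fun i => h12 (hgC1 i)) hperp hg0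
    (fun i => hde _ (hgC1 i)) (by simpa using hn8)
  rw [hspan] at hcodes
  rw [hcodes, (liftCode_out_injective hind fun i => h12 (hgC1 i)).injOn.ncard_image,
    ncard_preimage_singleton_of_surjective
      ((condMap_surjective _ i0).comp (gram_surjective hperp hind)),
    Nat.card_zmod, Module.finrank_pi_fintype, Module.finrank_fintype_fun_eq_card, card_condIndex,
    Finset.sum_const, Finset.card_univ, Fintype.card_fin, smul_eq_mul]
  exact congrArg _ (count_exponent_eq hquot i0.pos hk1)

end Paper
end
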